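/- arXiv:2302.00657 — 2 statements merged into one kernel-verified Lean document; each statement's English description precedes it below -/
import Mathlib

section
/- Let H be a thin spider with partition (S, K, R) such that R = ∅, let u ∈ S, and let uw be a tail added to H (w ∉ V(H)). Then the minimum number of fill edges (excluding the tail uw) in a P4-sparse completion of H+uw equals |K| − 1. -/
open SimpleGraph Set

variable {α : Type*}

/-- The graph `G + uw` obtained from `G` by adding the tail edge `uw`. -/
def addTail (G : SimpleGraph α) (u w : α) : SimpleGraph α :=
  G ⊔ SimpleGraph.fromEdgeSet {s(u, w)}

/-- The number of fill edges of a completion `G'` of the base graph `base`: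
the edges of `G'` that are not edges of `base`. -/
noncomputable def fillCount (base G' : SimpleGraph α) : ℕ :=
  (G'.edgeSet \ base.edgeSet).ncard

/-- `S` is an independent set of the graph `G`. -/
def IsIndepSetOn (G : SimpleGraph α) (S : Set α) : Prop :=
  ∀ x ∈ S, ∀ y ∈ S, ¬ G.Adj x y

/-- A graph is split if its vertex set can be partitioned into a clique and an
independent set. -/
def IsSplitGraph (G : SimpleGraph α) : Prop :=
  ∃ K S : Set α, K ∪ S = Set.univ ∧ Disjoint K S ∧ G.IsClique K ∧ IsIndepSetOn G S

/-- `a b c d` (in this order) induce a chordless path `P₄` in `G`. -/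
def IsInducedP4 (G : SimpleGraph α) (a b c d : α) : Prop :=
  a ≠ b ∧ a ≠ c ∧ a ≠ d ∧ b ≠ c ∧ b ≠ d ∧ c ≠ d ∧
  G.Adj a b ∧ G.Adj b c ∧ G.Adj c d ∧ ¬ G.Adj a c ∧ ¬ G.Adj a d ∧ ¬ G.Adj b d

/-- `a b c d` (in this order) induce a chordless cycle `C₄` in `G`. -/
def IsInducedC4 (G : SimpleGraph α) (a b c d : α) : Prop :=
  a ≠ b ∧ a ≠ c ∧ a ≠ d ∧ b ≠ c ∧ b ≠ d ∧ c ≠ d ∧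
  G.Adj a b ∧ G.Adj b c ∧ G.Adj c d ∧ G.Adj d a ∧ ¬ G.Adj a c ∧ ¬ G.Adj b d

/-- `a b c d` induce a `2K₂` (two independent edges `ab` and `cd`) in `G`. -/
def IsInduced2K2 (G : SimpleGraph α) (a b c d : α) : Prop :=
  a ≠ b ∧ a ≠ c ∧ a ≠ d ∧ b ≠ c ∧ b ≠ d ∧ c ≠ d ∧
  G.Adj a b ∧ G.Adj c d ∧ ¬ G.Adj a c ∧ ¬ G.Adj a d ∧ ¬ G.Adj b c ∧ ¬ G.Adj b d

/-- A graph is threshold iff it has no induced `C₄`, `P₄`, or `2K₂`. -/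
def IsThresholdGraph (G : SimpleGraph α) : Prop :=
  (∀ a b c d, ¬ IsInducedC4 G a b c d) ∧ (∀ a b c d, ¬ IsInducedP4 G a b c d) ∧
  (∀ a b c d, ¬ IsInduced2K2 G a b c d)

/-- A graph is quasi-threshold iff it has no induced `C₄` or `P₄`. -/
def IsQuasiThresholdGraph (G : SimpleGraph α) : Prop :=
  (∀ a b c d, ¬ IsInducedC4 G a b c d) ∧ (∀ a b c d, ¬ IsInducedP4 G a b c d)

/-- `t` is the vertex set of an induced `P₄` of `G`. -/
def IsP4SetOn (G : SimpleGraph α) (t : Set α) : Prop :=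
  ∃ a b c d : α, t = {a, b, c, d} ∧ IsInducedP4 G a b c d

/-- A graph is `P₄`-sparse iff every set of five vertices induces at most one `P₄`. -/
def IsP4Sparse (G : SimpleGraph α) : Prop :=
  ∀ s : Set α, s.ncard = 5 →
    ∀ t₁ ⊆ s, ∀ t₂ ⊆ s, IsP4SetOn G t₁ → IsP4SetOn G t₂ → t₁ = t₂

/-- The subgraph of `H` induced by the set `R` (as a graph on the same vertex type,
all vertices outside `R` being isolated). -/
def restrictSet (H : SimpleGraph α) (R : Set α) : SimpleGraph α where
  Adj x y := H.Adj x y ∧ x ∈ R ∧ y ∈ R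
  symm := ⟨fun x y ⟨h, hx, hy⟩ => ⟨h.symm, hy, hx⟩⟩
  loopless := ⟨fun x h => H.loopless.irrefl x h.1⟩

/-- `(S, K, R)` is a thin-spider partition of (the vertex set of) `H`. -/
def ThinSpider (H : SimpleGraph α) (S K R : Set α) : Prop :=
  IsIndepSetOn H S ∧ H.IsClique K ∧ S.ncard = K.ncard ∧ 2 ≤ K.ncard ∧
  Disjoint S K ∧ Disjoint S R ∧ Disjoint K R ∧
  (∀ r ∈ R, ∀ k ∈ K, H.Adj r k) ∧ (∀ r ∈ R, ∀ s ∈ S, ¬ H.Adj r s) ∧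
  ∃ f : α → α, Set.BijOn f S K ∧ ∀ s ∈ S, ∀ k ∈ K, (H.Adj s k ↔ k = f s)

/-- `(S, K, R)` is a thick-spider partition of (the vertex set of) `H`;
thick spiders are assumed to have `|K| ≥ 3`. -/
def ThickSpider (H : SimpleGraph α) (S K R : Set α) : Prop :=
  IsIndepSetOn H S ∧ H.IsClique K ∧ S.ncard = K.ncard ∧ 3 ≤ K.ncard ∧
  Disjoint S K ∧ Disjoint S R ∧ Disjoint K R ∧
  (∀ r ∈ R, ∀ k ∈ K, H.Adj r k) ∧ (∀ r ∈ R, ∀ s ∈ S, ¬ H.Adj r s) ∧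
  ∃ f : α → α, Set.BijOn f S K ∧ ∀ s ∈ S, ∀ k ∈ K, (H.Adj s k ↔ k ≠ f s)

/-- The set of possible numbers of fill edges of completions of `base` into the
graph class `C`. -/
def completionFills (C : SimpleGraph α → Prop) (base : SimpleGraph α) : Set ℕ :=
  {n | ∃ G' : SimpleGraph α, base ≤ G' ∧ C G' ∧ fillCount base G' = n}

/-!
Joining `u` to every vertex of `K` costs `|K| - 1` fill edges and yields a thin spider with
body `K ∪ {u}` in which `w` is the leg of `u`. Such a graph is `P₄`-sparse: when the vertices
outside a clique are pairwise non-adjacent and have at most one neighbour each, all distinct, the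
only `P₄`s are `s, f s, f t, t`, and two different ones span six vertices. Conversely, for every `k ∈ K` other than
the partner `f u` of `u`, with leg `s`, the path `w, u, f u, k, s` of `H + uw` must receive a chord
other than `w (f u)`: otherwise these five vertices carry two `P₄`s (`u, f u, k, s` and one
through `w`). Such a chord is a fill edge joining `{u, w, f u}` to `{k, s}`, so distinct `k` give
distinct fill edges.
-/

theorem IsInducedP4.reverse {G : SimpleGraph α} {a b c d : α} (h : IsInducedP4 G a b c d) :
    IsInducedP4 G d c b a := by
  obtain ⟨hab, hac, had, hbc, hbd, hcd, h1, h2, h3, n1, n2, n3⟩ := h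
  exact ⟨hcd.symm, hbd.symm, had.symm, hbc.symm, hac.symm, hab.symm, h3.symm, h2.symm, h1.symm,
    fun h => n3 h.symm, fun h => n2 h.symm, fun h => n1 h.symm⟩

section SplitMatching

variable {G : SimpleGraph α} {S : Set α} {f : α → α}

theorem IsInducedP4.start_mem (hclique : G.IsClique Sᶜ)
    (hadj : ∀ s ∈ S, ∀ x, G.Adj s x → x = f s) (hmaps : MapsTo f S Sᶜ) {a b c d : α}
    (hP : IsInducedP4 G a b c d) : a ∈ S := by
  obtain ⟨-, hac, had, -, -, hcd, -, -, hcd', hnac, hnad, -⟩ := hP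
  by_contra ha
  have hc : c ∈ S := by_contra fun hc => hnac (hclique ha hc hac)
  have hd : d ∈ S := by_contra fun hd => hnad (hclique ha hd had)
  exact hmaps hc (hadj c hc d hcd' ▸ hd)

theorem IsP4SetOn.eq_union_image (hclique : G.IsClique Sᶜ)
    (hadj : ∀ s ∈ S, ∀ x, G.Adj s x → x = f s) (hmaps : MapsTo f S Sᶜ) {t : Set α}
    (ht : IsP4SetOn G t) : ∃ A ⊆ S, A.ncard = 2 ∧ t = A ∪ f '' A := by
  obtain ⟨a, b, c, d, rfl, hP⟩ := ht
  have ha := hP.start_mem hclique hadj hmaps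
  have hd := hP.reverse.start_mem hclique hadj hmaps
  obtain ⟨-, -, had, -, -, -, hab, -, hcd, -, -, -⟩ := hP
  refine ⟨{a, d}, pair_subset ha hd, ncard_pair had, ?_⟩
  rw [image_pair, ← hadj a ha b hab, ← hadj d hd c hcd.symm]
  ext x
  simp only [mem_insert_iff, mem_singleton_iff, mem_union]
  tauto

theorem isP4Sparse_of_isClique_compl (hclique : G.IsClique Sᶜ)
    (hadj : ∀ s ∈ S, ∀ x, G.Adj s x → x = f s) (hmaps : MapsTo f S Sᶜ) (hinj : InjOn f S) :
    IsP4Sparse G := by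
  intro s hs t₁ ht₁ t₂ ht₂ hP₁ hP₂
  have hfin : s.Finite := finite_of_ncard_ne_zero (by omega)
  obtain ⟨A₁, hA₁S, hA₁, rfl⟩ := hP₁.eq_union_image hclique hadj hmaps
  obtain ⟨A₂, hA₂S, hA₂, rfl⟩ := hP₂.eq_union_image hclique hadj hmaps
  set A := A₁ ∪ A₂
  have hAS : A ⊆ S := union_subset hA₁S hA₂S
  have hAs : A ∪ f '' A ⊆ s := by
    rw [image_union, union_union_union_comm]
    exact union_subset ht₁ ht₂
  have hAfin : A.Finite := hfin.subset (subset_union_left.trans hAs)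
  have hdisj : Disjoint A (f '' A) :=
    disjoint_left.2 fun x hx hfx => (hmaps.mono_left hAS).image_subset hfx (hAS hx)
  have hA : 2 * A.ncard ≤ 5 :=
    calc 2 * A.ncard = (A ∪ f '' A).ncard := by
          rw [ncard_union_eq hdisj hAfin (hAfin.image f), (hinj.mono hAS).ncard_image, two_mul]
      _ ≤ s.ncard := ncard_le_ncard hAs hfin
      _ = 5 := hs
  have h₁ : A₁ = A := eq_of_subset_of_ncard_le subset_union_left (by omega) hAfin
  have h₂ : A₂ = A := eq_of_subset_of_ncard_le subset_union_right (by omega) hAfin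
  rw [h₁, h₂]

end SplitMatching

theorem ncard_eq_five_of_ne {a b c d e : α} (hab : a ≠ b) (hac : a ≠ c) (had : a ≠ d) (hae : a ≠ e)
    (hbc : b ≠ c) (hbd : b ≠ d) (hbe : b ≠ e) (hcd : c ≠ d) (hce : c ≠ e) (hde : d ≠ e) :
    ({a, b, c, d, e} : Set α).ncard = 5 := by
  classical
  rw [← coe_toFinset ({a, b, c, d, e} : Set α), ncard_coe_finset]
  simp [Finset.card_insert_of_notMem, *]

theorem IsP4Sparse.adj_of_path {G : SimpleGraph α} (hG : IsP4Sparse G) {v₀ v₁ v₂ v₃ v₄ : α}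
    (h₀₂ : v₀ ≠ v₂) (h₀₃ : v₀ ≠ v₃) (h₀₄ : v₀ ≠ v₄) (h₁₃ : v₁ ≠ v₃) (h₁₄ : v₁ ≠ v₄)
    (h₂₄ : v₂ ≠ v₄) (e₀₁ : G.Adj v₀ v₁) (e₁₂ : G.Adj v₁ v₂) (e₂₃ : G.Adj v₂ v₃)
    (e₃₄ : G.Adj v₃ v₄) :
    G.Adj v₁ v₃ ∨ G.Adj v₀ v₃ ∨ G.Adj v₁ v₄ ∨ G.Adj v₀ v₄ ∨ G.Adj v₂ v₄ := by
  by_contra! ⟨n₁₃, n₀₃, n₁₄, n₀₄, n₂₄⟩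
  have h₀₁ := e₀₁.ne; have h₁₂ := e₁₂.ne; have h₂₃ := e₂₃.ne; have h₃₄ := e₃₄.ne
  have hs := ncard_eq_five_of_ne h₀₁ h₀₂ h₀₃ h₀₄ h₁₂ h₁₃ h₁₄ h₂₃ h₂₄ h₃₄
  have hP : IsP4SetOn G {v₁, v₂, v₃, v₄} :=
    ⟨_, _, _, _, rfl, h₁₂, h₁₃, h₁₄, h₂₃, h₂₄, h₃₄, e₁₂, e₂₃, e₃₄, n₁₃, n₁₄, n₂₄⟩
  have hv₀ : v₀ ∉ ({v₁, v₂, v₃, v₄} : Set α) := by simp [h₀₁, h₀₂, h₀₃, h₀₄]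
  -- a second `P₄` through `v₀` lies in the same five vertices
  by_cases e₀₂ : G.Adj v₀ v₂
  · have hQ : IsP4SetOn G {v₀, v₂, v₃, v₄} :=
      ⟨_, _, _, _, rfl, h₀₂, h₀₃, h₀₄, h₂₃, h₂₄, h₃₄, e₀₂, e₂₃, e₃₄, n₀₃, n₀₄, n₂₄⟩
    refine hv₀ (hG _ hs _ ?_ _ ?_ hQ hP ▸ by simp) <;> intro x <;> simp <;> tauto
  · have hQ : IsP4SetOn G {v₀, v₁, v₂, v₃} :=
      ⟨_, _, _, _, rfl, h₀₁, h₀₂, h₀₃, h₁₂, h₁₃, h₂₃, e₀₁, e₁₂, e₂₃, e₀₂, n₀₃, n₁₃⟩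
    refine hv₀ (hG _ hs _ ?_ _ ?_ hQ hP ▸ by simp) <;> intro x <;> simp <;> tauto

theorem ncard_le_ncard_of_forall_exists {β γ : Type*} {A : Set β} {F : Set γ}
    (P : β → γ → Prop) (hex : ∀ a ∈ A, ∃ e ∈ F, P a e)
    (huniq : ∀ a ∈ A, ∀ b ∈ A, ∀ e, P a e → P b e → a = b) (hF : F.Finite) :
    A.ncard ≤ F.ncard := by
  rcases A.eq_empty_or_nonempty with rfl | ⟨a, ha⟩
  · simp
  have : Nonempty γ := ⟨(hex a ha).choose⟩
  choose! φ hφF hφP using hex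
  exact ncard_le_ncard_of_injOn φ hφF
    (fun a ha b hb h => huniq a ha b hb _ (hφP a ha) (h ▸ hφP b hb)) hF

def joinVertexToSet (G : SimpleGraph α) (u : α) (T : Set α) : SimpleGraph α :=
  G ⊔ fromEdgeSet ((fun k => s(u, k)) '' T)

theorem joinVertexToSet_adj {G : SimpleGraph α} {u : α} {T : Set α} {x y : α} :
    (joinVertexToSet G u T).Adj x y ↔ G.Adj x y ∨ x ≠ y ∧ (x = u ∧ y ∈ T ∨ y = u ∧ x ∈ T) := by
  simp only [joinVertexToSet, sup_adj, fromEdgeSet_adj, mem_image, Sym2.eq_iff]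
  constructor
  · rintro (h | ⟨⟨k, hk, ⟨rfl, rfl⟩ | ⟨rfl, rfl⟩⟩, hxy⟩) <;> tauto
  · rintro (h | ⟨hxy, ⟨rfl, hy⟩ | ⟨rfl, hx⟩⟩)
    · exact Or.inl h
    · exact Or.inr ⟨⟨y, hy, Or.inl ⟨rfl, rfl⟩⟩, hxy⟩
    · exact Or.inr ⟨⟨x, hx, Or.inr ⟨rfl, rfl⟩⟩, hxy⟩

theorem addTail_eq_joinVertexToSet (G : SimpleGraph α) (u w : α) :
    addTail G u w = joinVertexToSet G u {w} := by
  simp [addTail, joinVertexToSet]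

theorem fillCount_joinVertexToSet {B : SimpleGraph α} {u : α} {T : Set α} (hu : u ∉ T)
    (hT : ∀ k ∈ T, ¬ B.Adj u k) : fillCount B (joinVertexToSet B u T) = T.ncard := by
  have hB : Disjoint ((fun k => s(u, k)) '' T) B.edgeSet :=
    disjoint_left.2 (by rintro _ ⟨k, hk, rfl⟩; exact hT k hk)
  have hdiag : Disjoint ((fun k => s(u, k)) '' T) Sym2.diagSet :=
    disjoint_left.2 (by rintro _ ⟨k, hk, rfl⟩ h; exact hu (Sym2.mk_isDiag_iff.1 h ▸ hk))
  rw [fillCount, joinVertexToSet, edgeSet_sup, edgeSet_fromEdgeSet, union_sdiff_left,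
    sdiff_sdiff_comm, hB.sdiff_eq_left, hdiag.sdiff_eq_left]
  exact InjOn.ncard_image fun _ _ _ _ h => Sym2.congr_right.1 h

section ThinSpiderTail

variable {H : SimpleGraph α} {S K : Set α} {f : α → α} {u w : α}

theorem ThinSpider.exists_adj_iff (hH : ThinSpider H S K ∅) (hcover : S ∪ K = {w}ᶜ)
    (hw : ∀ x, ¬ H.Adj w x) : ∃ f, BijOn f S K ∧ ∀ s ∈ S, ∀ x, H.Adj s x ↔ x = f s := by
  obtain ⟨hS, -, -, -, -, -, -, -, -, f, hf, hadj⟩ := hH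
  refine ⟨f, hf, fun s hs x => ⟨fun h => ?_, fun h => (hadj s hs x (h ▸ hf.mapsTo hs)).2 h⟩⟩
  have hx : x ∈ S ∪ K := hcover ▸ fun hxw : x = w => hw s (hxw ▸ h.symm)
  exact hx.elim (fun hxS => absurd h (hS s hs x hxS)) fun hxK => (hadj s hs x hxK).1 h

theorem isP4Sparse_joinVertexToSet_addTail (hcover : S ∪ K = {w}ᶜ) (hSK : Disjoint S K)
    (hK : H.IsClique K) (hf : BijOn f S K) (hSadj : ∀ s ∈ S, ∀ x, H.Adj s x ↔ x = f s)
    (hw : ∀ x, ¬ H.Adj w x) (hu : u ∈ S) :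
    IsP4Sparse (joinVertexToSet (addTail H u w) u (K \ {f u})) := by
  classical
  have hwSK : w ∉ S ∪ K := by simp [hcover]
  have huK : u ∉ K := hSK.notMem_of_mem_left hu
  have hSw : ∀ s ∈ S, s ≠ w := fun s hs h => hwSK (Or.inl (h ▸ hs))
  have huw : u ≠ w := hSw u hu
  set G := joinVertexToSet (addTail H u w) u (K \ {f u})
  have hadj : ∀ x y, G.Adj x y ↔ H.Adj x y ∨ x ≠ y ∧ (x = u ∧ (y = w ∨ y ∈ K \ {f u}) ∨
      y = u ∧ (x = w ∨ x ∈ K \ {f u})) := by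
    intro x y
    rw [joinVertexToSet_adj, addTail_eq_joinVertexToSet, joinVertexToSet_adj, mem_singleton_iff]
    tauto
  have hjoin : ∀ k ∈ K, G.Adj u k := fun k hk => (hadj u k).2 <| by
    by_cases hku : k = f u
    · exact Or.inl ((hSadj u hu k).2 hku)
    · exact Or.inr ⟨fun h => huK (h ▸ hk), Or.inl ⟨rfl, Or.inr ⟨hk, hku⟩⟩⟩
  have hbody : ∀ x ∉ insert w (S \ {u}), x = u ∨ x ∈ K := by
    intro x hx
    simp only [mem_insert_iff, mem_sdiff, mem_singleton_iff, not_or, not_and_not_right] at hx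
    have hx' : x ∈ S ∪ K := hcover ▸ hx.1
    exact hx'.imp hx.2 id
  refine isP4Sparse_of_isClique_compl (S := insert w (S \ {u})) (f := Function.update f w u)
    ?_ ?_ ?_ ?_
  · intro x hx y hy hxy
    rcases hbody x hx with rfl | hxK <;> rcases hbody y hy with rfl | hyK
    exacts [absurd rfl hxy, hjoin y hyK, (hjoin x hxK).symm, (hadj x y).2 (Or.inl (hK hxK hyK hxy))]
  · rintro s (rfl | ⟨hs, hsu⟩) x h <;> rw [hadj] at h
    · rw [Function.update_self]
      rcases h with h | ⟨-, ⟨rfl, -⟩ | ⟨rfl, -⟩⟩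
      exacts [absurd h (hw x), absurd rfl huw, rfl]
    · rw [Function.update_of_ne (hSw s hs)]
      rcases h with h | ⟨-, ⟨rfl, -⟩ | ⟨-, rfl | ⟨hsK, -⟩⟩⟩
      exacts [(hSadj s hs x).1 h, absurd rfl hsu, absurd rfl (hSw s hs),
        absurd hsK (hSK.notMem_of_mem_left hs)]
  · rintro s (rfl | ⟨hs, hsu⟩)
    · simp [huw]
    · have hfs := hf.mapsTo hs
      rw [Function.update_of_ne (hSw s hs)]
      simp only [mem_compl_iff, mem_insert_iff, mem_sdiff, not_or]
      exact ⟨fun h => hwSK (Or.inr (h ▸ hfs)), fun h => hSK.notMem_of_mem_right hfs h.1⟩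
  · rw [injOn_insert fun h => hwSK (Or.inl h.1)]
    refine ⟨(hf.injOn.mono sdiff_subset).congr fun s hs =>
      (Function.update_of_ne (hSw s hs.1) _ _).symm, ?_⟩
    rintro ⟨s, ⟨hs, -⟩, h⟩
    rw [Function.update_of_ne (hSw s hs), Function.update_self] at h
    exact huK (h ▸ hf.mapsTo hs)

theorem sub_one_mem_completionFills (hcover : S ∪ K = {w}ᶜ) (hSK : Disjoint S K)
    (hK : H.IsClique K) (hf : BijOn f S K) (hSadj : ∀ s ∈ S, ∀ x, H.Adj s x ↔ x = f s)
    (hw : ∀ x, ¬ H.Adj w x) (hu : u ∈ S) :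
    K.ncard - 1 ∈ completionFills IsP4Sparse (addTail H u w) := by
  have huK : u ∉ K := hSK.notMem_of_mem_left hu
  have hwK : w ∉ K := fun h => (show w ∉ S ∪ K by simp [hcover]) (Or.inr h)
  have hnadj : ∀ k ∈ K \ {f u}, ¬ (addTail H u w).Adj u k := by
    rintro k ⟨hk, hku⟩ h
    rw [addTail_eq_joinVertexToSet, joinVertexToSet_adj] at h
    rcases h with h | ⟨-, ⟨-, rfl⟩ | ⟨rfl, -⟩⟩
    · exact hku ((hSadj u hu k).1 h)
    · exact hwK hk
    · exact huK hk
  refine ⟨joinVertexToSet _ u (K \ {f u}), le_sup_left,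
    isP4Sparse_joinVertexToSet_addTail hcover hSK hK hf hSadj hw hu, ?_⟩
  rw [fillCount_joinVertexToSet (fun h => huK h.1) hnadj,
    ncard_sdiff_singleton_of_mem (hf.mapsTo hu)]

theorem mem_edgeSet_sdiff_addTail {G : SimpleGraph α} {x y : α} (h : G.Adj x y)
    (hH : ¬ H.Adj x y) (hyu : y ≠ u) (hyw : y ≠ w) :
    s(x, y) ∈ G.edgeSet \ (addTail H u w).edgeSet := by
  refine ⟨h, fun hB => ?_⟩
  rw [mem_edgeSet, addTail_eq_joinVertexToSet, joinVertexToSet_adj] at hB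
  rcases hB with hB | ⟨-, ⟨-, hB⟩ | ⟨hB, -⟩⟩
  exacts [hH hB, hyw hB, hyu hB]

theorem exists_fill_edge_of_isP4Sparse (hcover : S ∪ K = {w}ᶜ) (hSK : Disjoint S K)
    (hK : H.IsClique K) (hf : MapsTo f S K) (hSadj : ∀ s ∈ S, ∀ x, H.Adj s x ↔ x = f s)
    (hw : ∀ x, ¬ H.Adj w x) (hu : u ∈ S) {G : SimpleGraph α} (hle : addTail H u w ≤ G)
    (hG : IsP4Sparse G) {s : α} (hs : s ∈ S) (hsu : f s ≠ f u) :
    ∃ x ∈ ({u, w, f u} : Set α), ∃ y ∈ ({f s, s} : Set α),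
      s(x, y) ∈ G.edgeSet \ (addTail H u w).edgeSet := by
  have hwSK : w ∉ S ∪ K := by simp [hcover]
  have hfu := hf hu
  have hfs := hf hs
  have hsu' : s ≠ u := fun h => hsu (h ▸ rfl)
  have hws : w ≠ s := fun h => hwSK (Or.inl (h ▸ hs))
  have hwfu : w ≠ f u := fun h => hwSK (Or.inr (h ▸ hfu))
  have hwfs : w ≠ f s := fun h => hwSK (Or.inr (h ▸ hfs))
  have hufs : u ≠ f s := hSK.ne_of_mem hu hfs
  have hfus : f u ≠ s := (hSK.ne_of_mem hs hfu).symm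
  have hwu : G.Adj w u := hle <| by
    rw [addTail_eq_joinVertexToSet, joinVertexToSet_adj]
    exact Or.inr ⟨fun h => hwSK (Or.inl (h ▸ hu)), Or.inr ⟨rfl, rfl⟩⟩
  rcases hG.adj_of_path hwfu hwfs hws hufs hsu'.symm hfus hwu (hle (Or.inl ((hSadj u hu _).2 rfl)))
    (hle (Or.inl (hK hfu hfs hsu.symm))) (hle (Or.inl ((hSadj s hs _).2 rfl).symm))
    with h | h | h | h | h
  · exact ⟨u, by simp, f s, by simp,
      mem_edgeSet_sdiff_addTail h (fun h' => hsu ((hSadj u hu _).1 h')) hufs.symm hwfs.symm⟩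
  · exact ⟨w, by simp, f s, by simp, mem_edgeSet_sdiff_addTail h (hw _) hufs.symm hwfs.symm⟩
  · exact ⟨u, by simp, s, by simp,
      mem_edgeSet_sdiff_addTail h (fun h' => hfus ((hSadj u hu _).1 h').symm) hsu' hws.symm⟩
  · exact ⟨w, by simp, s, by simp, mem_edgeSet_sdiff_addTail h (hw _) hsu' hws.symm⟩
  · exact ⟨f u, by simp, s, by simp,
      mem_edgeSet_sdiff_addTail h (fun h' => hsu ((hSadj s hs _).1 h'.symm).symm) hsu' hws.symm⟩

theorem sub_one_le_fillCount [Finite α] (hcover : S ∪ K = {w}ᶜ) (hSK : Disjoint S K)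
    (hK : H.IsClique K) (hf : BijOn f S K) (hSadj : ∀ s ∈ S, ∀ x, H.Adj s x ↔ x = f s)
    (hw : ∀ x, ¬ H.Adj w x) (hu : u ∈ S) {G : SimpleGraph α} (hle : addTail H u w ≤ G)
    (hG : IsP4Sparse G) : K.ncard - 1 ≤ fillCount (addTail H u w) G := by
  classical
  have hwSK : w ∉ S ∪ K := by simp [hcover]
  have hfu := hf.mapsTo hu
  -- `ℓ` recovers `k` from either end `k`, `s` of the fill edge charged to it
  let ℓ : α → α := fun y => if y ∈ S then f y else y
  have hℓS : ∀ s ∈ S, ℓ s = f s := fun s hs => if_pos hs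
  have hℓK : ∀ k ∈ K, ℓ k = k := fun k hk => if_neg (hSK.notMem_of_mem_right hk)
  have hℓw : ℓ w = w := if_neg fun h => hwSK (Or.inl h)
  rw [← ncard_sdiff_singleton_of_mem hfu]
  refine ncard_le_ncard_of_forall_exists
    (fun k e => ∃ x ∈ ({u, w, f u} : Set α), ∃ y, ℓ y = k ∧ e = s(x, y)) ?_ ?_ (toFinite _)
  · rintro k ⟨hk, hku : k ≠ f u⟩
    obtain ⟨s, hs, rfl⟩ := hf.surjOn hk
    obtain ⟨x, hx, y, hy, he⟩ :=
      exists_fill_edge_of_isP4Sparse hcover hSK hK hf.mapsTo hSadj hw hu hle hG hs hku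
    refine ⟨_, he, x, hx, y, ?_, rfl⟩
    rcases hy with rfl | rfl
    exacts [hℓK _ hk, hℓS _ hs]
  · rintro k - k' ⟨hk', hku' : k' ≠ f u⟩ e ⟨x, hx, y, rfl, rfl⟩ ⟨x', -, y', rfl, he⟩
    rcases Sym2.eq_iff.1 he with ⟨-, rfl⟩ | ⟨rfl, -⟩
    · rfl
    · rcases hx with rfl | rfl | rfl
      exacts [(hku' (hℓS _ hu)).elim, (hwSK (Or.inr (hℓw ▸ hk'))).elim, (hku' (hℓK _ hfu)).elim]

end ThinSpiderTail

/-- tail at `u ∈ S` of a thin spider with `R = ∅`. -/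
theorem thinSpider_tail_S_empty_R [Fintype α]
    (H : SimpleGraph α) (u w : α) (S K R : Set α)
    (hspider : ThinSpider H S K R)
    (hcover : S ∪ K ∪ R = {w}ᶜ)
    (hw : ∀ x, ¬ H.Adj w x)
    (hR : R = ∅) (hu : u ∈ S) :
    IsLeast (completionFills IsP4Sparse (addTail H u w)) (K.ncard - 1) := by
  subst hR
  rw [union_empty] at hcover
  obtain ⟨f, hf, hSadj⟩ := hspider.exists_adj_iff hcover hw
  obtain ⟨-, hK, -, -, hSK, -⟩ := hspider
  refine ⟨sub_one_mem_completionFills hcover hSK hK hf hSadj hw hu, ?_⟩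
  rintro n ⟨G, hle, hG, rfl⟩
  exact sub_one_le_fillCount hcover hSK hK hf hSadj hw hu hle hG
end

section
/- Let H be a thin spider with partition (S, K, R) such that R ≠ ∅ and the subgraph of H induced by R is P4-sparse, let u ∈ S, and let uw be a tail added to H (w ∉ V(H)). Then the minimum number of fill edges (excluding the tail uw) in a P4-sparse completion of H+uw equals |K|. -/
open SimpleGraph Set

variable {α : Type*}

/-! Making the body vertex `f u` of the leg at `u` universal costs one fill edge to each other
leg vertex and one to `w`, that is `|K|` edges, and the result is P₄-sparse: a P₄ avoids the
universal vertex and the pendant edge `uw` hanging from it, so it is a P₄ of `H[R]` or consists of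
two legs `s, f s, f t, t`. Conversely, for every `s ∈ S \ {u}` the path `s, f s, f u, u, w` of
`H + uw` carries two P₄'s on five vertices, so a P₄-sparse completion adds a chord of it meeting
`s f(s)`; these chords are distinct for distinct `s`. One more fill edge is forced: unless one of
`f(u)w, ur, wr` (`r ∈ R`) is added, a single such chord still leaves two P₄'s on five vertices. -/

namespace IsInducedP4

variable {G G' : SimpleGraph α} {a b c d x : α}

lemma symm (h : IsInducedP4 G a b c d) : IsInducedP4 G d c b a := by
  obtain ⟨hab, hac, had, hbc, hbd, hcd, e₁, e₂, e₃, n₁, n₂, n₃⟩ := h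
  exact ⟨hcd.symm, hbd.symm, had.symm, hbc.symm, hac.symm, hab.symm, e₃.symm, e₂.symm,
    e₁.symm, fun h => n₃ h.symm, fun h => n₂ h.symm, fun h => n₁ h.symm⟩

lemma ncard_eq (h : IsInducedP4 G a b c d) : ({a, b, c, d} : Set α).ncard = 4 := by
  obtain ⟨hab, hac, had, hbc, hbd, hcd, -⟩ := h
  rw [ncard_insert_of_notMem (by simp [hab, hac, had]),
    ncard_insert_of_notMem (by simp [hbc, hbd]), ncard_pair hcd]

lemma exists_not_adj (h : IsInducedP4 G a b c d) (hx : x ∈ ({a, b, c, d} : Set α)) :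
    ∃ y ∈ ({a, b, c, d} : Set α), y ≠ x ∧ ¬ G.Adj x y := by
  obtain ⟨hab, hac, had, hbc, hbd, hcd, -, -, -, n₁, n₂, n₃⟩ := h
  simp only [mem_insert_iff, mem_singleton_iff] at hx
  rcases hx with rfl | rfl | rfl | rfl
  · exact ⟨c, by simp, hac.symm, n₁⟩
  · exact ⟨d, by simp, hbd.symm, n₃⟩
  · exact ⟨a, by simp, hac, fun h => n₁ h.symm⟩
  · exact ⟨b, by simp, hbd, fun h => n₃ h.symm⟩

lemma exists_adj_adj (h : IsInducedP4 G a b c d) (hx : x ∈ ({a, b, c, d} : Set α)) :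
    ∃ y ∈ ({a, b, c, d} : Set α), ∃ z ∈ ({a, b, c, d} : Set α),
      z ≠ x ∧ G.Adj x y ∧ G.Adj y z := by
  obtain ⟨hab, hac, had, hbc, hbd, hcd, e₁, e₂, e₃, -⟩ := h
  simp only [mem_insert_iff, mem_singleton_iff] at hx
  rcases hx with rfl | rfl | rfl | rfl
  · exact ⟨b, by simp, c, by simp, hac.symm, e₁, e₂⟩
  · exact ⟨c, by simp, d, by simp, hbd.symm, e₂, e₃⟩
  · exact ⟨b, by simp, a, by simp, hac, e₂.symm, e₁.symm⟩
  · exact ⟨c, by simp, b, by simp, hbd, e₃.symm, e₂.symm⟩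

lemma congr_on (h : IsInducedP4 G a b c d) {T : Set α} (hT : ({a, b, c, d} : Set α) ⊆ T)
    (hGG' : ∀ x ∈ T, ∀ y ∈ T, (G.Adj x y ↔ G'.Adj x y)) : IsInducedP4 G' a b c d := by
  obtain ⟨hab, hac, had, hbc, hbd, hcd, e₁, e₂, e₃, n₁, n₂, n₃⟩ := h
  have ha : a ∈ T := hT (by simp)
  have hb : b ∈ T := hT (by simp)
  have hc : c ∈ T := hT (by simp)
  have hd : d ∈ T := hT (by simp)
  exact ⟨hab, hac, had, hbc, hbd, hcd, (hGG' a ha b hb).1 e₁, (hGG' b hb c hc).1 e₂,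
    (hGG' c hc d hd).1 e₃, mt (hGG' a ha c hc).2 n₁, mt (hGG' a ha d hd).2 n₂,
    mt (hGG' b hb d hd).2 n₃⟩

end IsInducedP4

namespace IsP4SetOn

variable {G : SimpleGraph α} {t : Set α}

lemma ncard_eq (h : IsP4SetOn G t) : t.ncard = 4 := by
  obtain ⟨a, b, c, d, rfl, h⟩ := h
  exact h.ncard_eq

lemma finite (h : IsP4SetOn G t) : t.Finite :=
  finite_of_ncard_ne_zero (by simp [h.ncard_eq])

end IsP4SetOn

lemma ncard_lt_ncard_union_of_ne {s t : Set α} (hs : s.Finite) (ht : t.Finite)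
    (hst : s.ncard = t.ncard) (hne : s ≠ t) : s.ncard < (s ∪ t).ncard :=
  ncard_lt_ncard (ssubset_of_subset_of_ne subset_union_left fun h =>
    hne (eq_of_subset_of_ncard_le (union_eq_left.mp h.symm) hst.le hs).symm) (hs.union ht)

lemma ncard_le_five (x₁ x₂ x₃ x₄ x₅ : α) : ({x₁, x₂, x₃, x₄, x₅} : Set α).ncard ≤ 5 := by
  have := ncard_insert_le x₁ {x₂, x₃, x₄, x₅}
  have := ncard_insert_le x₂ {x₃, x₄, x₅}
  have := ncard_insert_le x₃ {x₄, x₅}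
  have := ncard_insert_le x₄ {x₅}
  have := ncard_singleton x₅
  omega

section P4Sparse

variable {G : SimpleGraph α}

lemma isP4Sparse_of_five_lt_ncard_union
    (h : ∀ t₁ t₂, IsP4SetOn G t₁ → IsP4SetOn G t₂ → t₁ ≠ t₂ → 5 < (t₁ ∪ t₂).ncard) :
    IsP4Sparse G := by
  intro s hs t₁ ht₁ t₂ ht₂ h₁ h₂
  by_contra hne
  have := ncard_le_ncard (union_subset ht₁ ht₂) (finite_of_ncard_ne_zero (by omega))
  have := h t₁ t₂ h₁ h₂ hne
  omega

lemma IsP4Sparse.eq_of_ncard_union_le (hG : IsP4Sparse G) {t₁ t₂ : Set α}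
    (h₁ : IsP4SetOn G t₁) (h₂ : IsP4SetOn G t₂) (h : (t₁ ∪ t₂).ncard ≤ 5) : t₁ = t₂ := by
  by_contra hne
  have := ncard_lt_ncard_union_of_ne h₁.finite h₂.finite (h₁.ncard_eq.trans h₂.ncard_eq.symm) hne
  rw [h₁.ncard_eq] at this
  exact hne (hG _ (by omega) t₁ subset_union_left t₂ subset_union_right h₁ h₂)

lemma IsP4Sparse.eq_of_subset_five (hG : IsP4Sparse G) {a b c d a' b' c' d' : α}
    (h₁ : IsInducedP4 G a b c d) (h₂ : IsInducedP4 G a' b' c' d') (x₁ x₂ x₃ x₄ x₅ : α)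
    (hsub : ({a, b, c, d} ∪ {a', b', c', d'} : Set α) ⊆ {x₁, x₂, x₃, x₄, x₅} := by
      simp [insert_subset_iff]) :
    ({a, b, c, d} : Set α) = {a', b', c', d'} :=
  hG.eq_of_ncard_union_le ⟨_, _, _, _, rfl, h₁⟩ ⟨_, _, _, _, rfl, h₂⟩
    ((ncard_le_ncard hsub (toFinite _)).trans (ncard_le_five _ _ _ _ _))

end P4Sparse

/-- The chords of the path `a b c d e` that meet its first edge `ab`. -/
def firstEdgeChords (a b c d e : α) : Set (Sym2 α) :=
  {s(a, c), s(a, d), s(a, e), s(b, d), s(b, e)}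

section FirstEdgeChords

variable {a b c d e : α} {p : Sym2 α}

lemma left_mem_or_mem_of_mem_firstEdgeChords (hp : p ∈ firstEdgeChords a b c d e) :
    a ∈ p ∨ b ∈ p := by
  simp only [firstEdgeChords, mem_insert_iff, mem_singleton_iff] at hp
  rcases hp with rfl | rfl | rfl | rfl | rfl <;> simp

lemma mem_of_mem_firstEdgeChords (hp : p ∈ firstEdgeChords a b c d e) {x : α} (hx : x ∈ p) :
    x ∈ ({a, b, c, d, e} : Set α) := by
  simp only [firstEdgeChords, mem_insert_iff, mem_singleton_iff] at hp
  rcases hp with rfl | rfl | rfl | rfl | rfl <;> rw [Sym2.mem_iff] at hx <;>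
    rcases hx with rfl | rfl <;> simp

variable {G : SimpleGraph α}

lemma IsP4Sparse.firstEdgeChords_inter_nonempty (hG : IsP4Sparse G)
    (hac : a ≠ c) (had : a ≠ d) (hae : a ≠ e) (hbd : b ≠ d) (hbe : b ≠ e) (hce : c ≠ e)
    (hab : G.Adj a b) (hbc : G.Adj b c) (hcd : G.Adj c d) (hde : G.Adj d e) :
    (G.edgeSet ∩ firstEdgeChords a b c d e).Nonempty := by
  by_contra hno
  obtain ⟨hac', had', hae', hbd', hbe'⟩ :
      ¬ G.Adj a c ∧ ¬ G.Adj a d ∧ ¬ G.Adj a e ∧ ¬ G.Adj b d ∧ ¬ G.Adj b e := by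
    refine ⟨?_, ?_, ?_, ?_, ?_⟩ <;> exact fun h => hno ⟨s(_, _), h, by simp [firstEdgeChords]⟩
  have habcd : IsInducedP4 G a b c d :=
    ⟨hab.ne, hac, had, hbc.ne, hbd, hcd.ne, hab, hbc, hcd, hac', had', hbd'⟩
  by_cases hce' : G.Adj c e
  · have habce : IsInducedP4 G a b c e :=
      ⟨hab.ne, hac, hae, hbc.ne, hbe, hce, hab, hbc, hce', hac', hae', hbe'⟩
    have hd : d ∈ ({a, b, c, e} : Set α) := by
      rw [← hG.eq_of_subset_five habcd habce a b c d e]; simp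
    simp [had.symm, hbd.symm, hcd.ne.symm, hde.ne] at hd
  · have hbcde : IsInducedP4 G b c d e :=
      ⟨hbc.ne, hbd, hbe, hcd.ne, hce, hde.ne, hbc, hcd, hde, hbd', hbe', hce'⟩
    have ha : a ∈ ({b, c, d, e} : Set α) := by
      rw [← hG.eq_of_subset_five habcd hbcde a b c d e]; simp
    simp [hab.ne, hac, had, hae] at ha

lemma IsP4Sparse.firstEdgeChords_inter_nontrivial (hG : IsP4Sparse G) {r : α}
    (hac : a ≠ c) (had : a ≠ d) (hae : a ≠ e) (hbd : b ≠ d) (hbe : b ≠ e) (hce : c ≠ e)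
    (hdr : d ≠ r) (her : e ≠ r)
    (hab : G.Adj a b) (hbc : G.Adj b c) (hcd : G.Adj c d) (hde : G.Adj d e)
    (hbr : G.Adj b r) (hcr : G.Adj c r)
    (hce' : ¬ G.Adj c e) (hdr' : ¬ G.Adj d r) (her' : ¬ G.Adj e r) :
    (G.edgeSet ∩ firstEdgeChords a b c d e).Nontrivial := by
  obtain ⟨p, hpG, hp⟩ := hG.firstEdgeChords_inter_nonempty hac had hae hbd hbe hce hab hbc hcd hde
  by_contra hnt
  have chord : ∀ q ∈ firstEdgeChords a b c d e, q ≠ p → q ∉ G.edgeSet :=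
    fun q hq hne h => hne (not_nontrivial_iff.mp hnt ⟨h, hq⟩ ⟨hpG, hp⟩)
  have habcd (hac' : ¬ G.Adj a c) (had' : ¬ G.Adj a d) (hbd' : ¬ G.Adj b d) :
      IsInducedP4 G a b c d :=
    ⟨hab.ne, hac, had, hbc.ne, hbd, hcd.ne, hab, hbc, hcd, hac', had', hbd'⟩
  have hbcde (hbd' : ¬ G.Adj b d) (hbe' : ¬ G.Adj b e) : IsInducedP4 G b c d e :=
    ⟨hbc.ne, hbd, hbe, hcd.ne, hce, hde.ne, hbc, hcd, hde, hbd', hbe', hce'⟩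
  simp only [firstEdgeChords, mem_insert_iff, mem_singleton_iff] at hp
  rcases hp with rfl | rfl | rfl | rfl | rfl <;>
    simp only [firstEdgeChords, forall_mem_insert, forall_eq, mem_singleton_iff, ne_eq,
      Sym2.eq_iff, mem_edgeSet, and_true, true_and, hac, had, hae, hbd, hbe, hce, hab.ne, hbc.ne,
      hcd.ne, hde.ne, hac.symm, had.symm, hae.symm, hbd.symm, hbe.symm, hce.symm, hab.ne.symm,
      hbc.ne.symm, hcd.ne.symm, hde.ne.symm, and_false, or_false, not_false_eq_true,
      forall_const, not_true_eq_false, IsEmpty.forall_iff] at chord hpG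
  · obtain ⟨had', hae', hbd', hbe'⟩ := chord
    have hacde : IsInducedP4 G a c d e :=
      ⟨hac, had, hae, hcd.ne, hce, hde.ne, hpG, hcd, hde, had', hae', hce'⟩
    have ha : a ∈ ({b, c, d, e} : Set α) := by
      rw [← hG.eq_of_subset_five hacde (hbcde hbd' hbe') a b c d e]; simp
    simp [hab.ne, hac, had, hae] at ha
  · obtain ⟨hac', hae', hbd', hbe'⟩ := chord
    have hbade : IsInducedP4 G b a d e :=
      ⟨hab.ne.symm, hbd, hbe, had, hae, hde.ne, hab.symm, hpG, hde, hbd', hbe', hae'⟩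
    have ha : a ∈ ({b, c, d, e} : Set α) := by
      rw [← hG.eq_of_subset_five hbade (hbcde hbd' hbe') a b c d e]; simp
    simp [hab.ne, hac, had, hae] at ha
  · obtain ⟨hac', had', hbd', hbe'⟩ := chord
    have ha : a ∈ ({b, c, d, e} : Set α) := by
      rw [← hG.eq_of_subset_five (habcd hac' had' hbd') (hbcde hbd' hbe') a b c d e]; simp
    simp [hab.ne, hac, had, hae] at ha
  · -- the chord `bd` leaves a single P₄ on `a, …, e`; the second one goes through `r`
    obtain ⟨-, -, -, hbe'⟩ := chord
    have hedcr : IsInducedP4 G e d c r := ⟨hde.ne.symm, hce.symm, her, hcd.ne.symm, hdr, hcr.ne,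
      hde.symm, hcd.symm, hcr, fun h => hce' h.symm, her', hdr'⟩
    have hedbr : IsInducedP4 G e d b r := ⟨hde.ne.symm, hbe.symm, her, hbd.symm, hdr, hbr.ne,
      hde.symm, hpG.symm, hbr, fun h => hbe' h.symm, her', hdr'⟩
    have hc : c ∈ ({e, d, b, r} : Set α) := by
      rw [← hG.eq_of_subset_five hedcr hedbr b c d e r]; simp
    simp [hce, hcd.ne, hbc.ne.symm, hcr.ne] at hc
  · obtain ⟨hac', had', hae', hbd'⟩ := chord
    have habed : IsInducedP4 G a b e d :=
      ⟨hab.ne, hae, had, hbe, hbd, hde.ne.symm, hab, hpG, hde.symm, hae', had', hbd'⟩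
    have hc : c ∈ ({a, b, e, d} : Set α) := by
      rw [← hG.eq_of_subset_five (habcd hac' had' hbd') habed a b c d e]; simp
    simp [hac.symm, hbc.ne.symm, hce, hcd.ne] at hc

end FirstEdgeChords

section PairwiseDisjoint

variable {ι β : Type*} {I : Set ι} {F : Set β} {A : ι → Set β}

lemma ncard_lt_ncard_of_pairwiseDisjoint_of_mem (hF : F.Finite) (hdisj : I.PairwiseDisjoint A)
    (hA : ∀ i ∈ I, (A i).Nonempty) (hAF : ∀ i ∈ I, A i ⊆ F) {x : β} (hx : x ∈ F)
    (hxA : ∀ i ∈ I, x ∉ A i) : I.ncard < F.ncard := by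
  have : Nonempty β := ⟨x⟩
  choose! g hg using hA
  have hinj : InjOn g I := fun i hi j hj hij =>
    hdisj.elim hi hj (not_disjoint_iff.mpr ⟨g i, hg i hi, hij ▸ hg j hj⟩)
  have hxg : x ∉ g '' I := by
    rintro ⟨i, hi, rfl⟩
    exact hxA i hi (hg i hi)
  have hsub : insert x (g '' I) ⊆ F :=
    insert_subset hx (image_subset_iff.mpr fun i hi => hAF i hi (hg i hi))
  calc I.ncard < (g '' I).ncard + 1 := by rw [hinj.ncard_image]; omega
    _ = (insert x (g '' I)).ncard := (ncard_insert_of_notMem hxg (hF.subset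
        ((subset_insert x _).trans hsub))).symm
    _ ≤ F.ncard := ncard_le_ncard hsub hF

lemma ncard_lt_ncard_of_pairwiseDisjoint_of_nontrivial (hF : F.Finite)
    (hdisj : I.PairwiseDisjoint A) (hA : ∀ i ∈ I, (A i).Nonempty) (hAF : ∀ i ∈ I, A i ⊆ F)
    {i₀ : ι} (hi₀ : i₀ ∈ I) (hA₀ : (A i₀).Nontrivial) : I.ncard < F.ncard := by
  obtain ⟨x, hx, y, hy, hxy⟩ := hA₀
  refine ncard_lt_ncard_of_pairwiseDisjoint_of_mem (A := fun i => A i \ {x}) hF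
    (hdisj.mono fun i => sdiff_subset) (fun i hi => ?_) (fun i hi => sdiff_subset.trans (hAF i hi))
    (hAF i₀ hi₀ hx) (fun i _ hxi => hxi.2 rfl)
  by_cases hii₀ : i = i₀
  · subst hii₀
    exact ⟨y, hy, hxy.symm⟩
  · obtain ⟨z, hz⟩ := hA i hi
    exact ⟨z, hz, fun hzx => (hdisj hi hi₀ hii₀).ne_of_mem hz (hzx ▸ hx) rfl⟩

end PairwiseDisjoint

lemma addTail_adj {G : SimpleGraph α} {u w : α} (huw : u ≠ w) {x y : α} :
    (addTail G u w).Adj x y ↔ G.Adj x y ∨ (x = u ∧ y = w) ∨ (x = w ∧ y = u) := by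
  simp only [addTail, sup_adj, fromEdgeSet_adj, mem_singleton_iff, Sym2.eq_iff]
  constructor
  · rintro (h | ⟨h, -⟩)
    exacts [Or.inl h, Or.inr h]
  · rintro (h | ⟨rfl, rfl⟩ | ⟨rfl, rfl⟩)
    exacts [Or.inl h, Or.inr ⟨Or.inl ⟨rfl, rfl⟩, huw⟩, Or.inr ⟨Or.inr ⟨rfl, rfl⟩, huw.symm⟩]

def makeUniversal (G : SimpleGraph α) (v : α) : SimpleGraph α :=
  G ⊔ fromEdgeSet {e | v ∈ e}

section MakeUniversal

variable {G : SimpleGraph α} {v : α}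

lemma makeUniversal_adj {x y : α} :
    (makeUniversal G v).Adj x y ↔ G.Adj x y ∨ ((x = v ∨ y = v) ∧ x ≠ y) := by
  simp only [makeUniversal, sup_adj, fromEdgeSet_adj, mem_ofPred_eq, Sym2.mem_iff, eq_comm]

lemma le_makeUniversal : G ≤ makeUniversal G v := le_sup_left

lemma makeUniversal_adj_self {x : α} (hx : x ≠ v) : (makeUniversal G v).Adj v x :=
  makeUniversal_adj.mpr (Or.inr ⟨Or.inl rfl, hx.symm⟩)

lemma fillCount_makeUniversal :
    fillCount G (makeUniversal G v) = {x | x ≠ v ∧ ¬ G.Adj v x}.ncard := by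
  have hinj : InjOn (fun x => s(v, x)) {x | x ≠ v ∧ ¬ G.Adj v x} := fun x _ y _ h =>
    (Sym2.congr_right.mp h)
  rw [fillCount, ← hinj.ncard_image]
  congr 1
  ext e
  induction e using Sym2.ind with
  | _ x y =>
    simp only [mem_sdiff, mem_edgeSet, makeUniversal_adj, mem_image, mem_ofPred_eq]
    constructor
    · rintro ⟨h | ⟨rfl | rfl, hne⟩, hn⟩
      · exact absurd h hn
      · exact ⟨y, ⟨hne.symm, hn⟩, rfl⟩
      · exact ⟨x, ⟨hne, fun h => hn h.symm⟩, Sym2.eq_swap⟩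
    · rintro ⟨z, ⟨hz, hnz⟩, h⟩
      rcases Sym2.eq_iff.mp h with ⟨rfl, rfl⟩ | ⟨rfl, rfl⟩
      · exact ⟨Or.inr ⟨Or.inl rfl, hz.symm⟩, hnz⟩
      · exact ⟨Or.inr ⟨Or.inr rfl, hz⟩, fun h => hnz h.symm⟩

end MakeUniversal

/-- A thin spider `(S, K, R)` with leg bijection `f : S → K`, spanning every vertex but the
isolated vertex `w`. -/
structure ThinSpiderWith (H : SimpleGraph α) (S K R : Set α) (f : α → α) (w : α) : Prop where
  indep : IsIndepSetOn H S
  isClique : H.IsClique K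
  ncard_eq : S.ncard = K.ncard
  two_le_ncard : 2 ≤ K.ncard
  disjoint_SK : Disjoint S K
  disjoint_SR : Disjoint S R
  disjoint_KR : Disjoint K R
  adj_RK : ∀ r ∈ R, ∀ k ∈ K, H.Adj r k
  not_adj_RS : ∀ r ∈ R, ∀ s ∈ S, ¬ H.Adj r s
  bijOn : BijOn f S K
  adj_iff : ∀ s ∈ S, ∀ k ∈ K, (H.Adj s k ↔ k = f s)
  cover : S ∪ K ∪ R = {w}ᶜ
  not_adj_w : ∀ x, ¬ H.Adj w x

lemma ThinSpider.exists_thinSpiderWith {H : SimpleGraph α} {S K R : Set α} {w : α}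
    (h : ThinSpider H S K R) (hcover : S ∪ K ∪ R = {w}ᶜ) (hw : ∀ x, ¬ H.Adj w x) :
    ∃ f, ThinSpiderWith H S K R f w := by
  obtain ⟨hS, hK, hSK, hK2, hdSK, hdSR, hdKR, hRK, hRS, f, hf, hadj⟩ := h
  exact ⟨f, hS, hK, hSK, hK2, hdSK, hdSR, hdKR, hRK, hRS, hf, hadj, hcover, hw⟩

namespace ThinSpiderWith

variable {H : SimpleGraph α} {S K R : Set α} {f : α → α} {u w a b c d : α}

lemma mem_of_ne (hH : ThinSpiderWith H S K R f w) {x : α} (hx : x ≠ w) : x ∈ S ∪ K ∪ R :=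
  hH.cover ▸ hx

lemma ne_w_of_adj (hH : ThinSpiderWith H S K R f w) {x y : α} (h : H.Adj x y) : x ≠ w := by
  rintro rfl
  exact hH.not_adj_w y h

lemma ne_w_of_mem (hH : ThinSpiderWith H S K R f w) {x : α} (hx : x ∈ S ∪ K ∪ R) : x ≠ w :=
  (hH.cover ▸ hx :)

lemma ne_w_of_mem_S (hH : ThinSpiderWith H S K R f w) {x : α} (hx : x ∈ S) : x ≠ w :=
  hH.ne_w_of_mem (Or.inl (Or.inl hx))

lemma ne_w_of_mem_K (hH : ThinSpiderWith H S K R f w) {x : α} (hx : x ∈ K) : x ≠ w :=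
  hH.ne_w_of_mem (Or.inl (Or.inr hx))

lemma ne_w_of_mem_R (hH : ThinSpiderWith H S K R f w) {x : α} (hx : x ∈ R) : x ≠ w :=
  hH.ne_w_of_mem (Or.inr hx)

lemma adj_iff_eq (hH : ThinSpiderWith H S K R f w) {s x : α} (hs : s ∈ S) :
    H.Adj s x ↔ x = f s := by
  refine ⟨fun h => ?_, fun h => (hH.adj_iff s hs x (h ▸ hH.bijOn.mapsTo hs)).mpr h⟩
  rcases hH.mem_of_ne (hH.ne_w_of_adj h.symm) with (hx | hx) | hx
  · exact absurd h (hH.indep s hs x hx)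
  · exact (hH.adj_iff s hs x hx).mp h
  · exact absurd h.symm (hH.not_adj_RS x hx s hs)

lemma adj_of_mem_K (hH : ThinSpiderWith H S K R f w) {k x : α} (hk : k ∈ K) (hx : x ∈ K ∪ R)
    (hne : k ≠ x) : H.Adj k x := by
  rcases hx with hx | hx
  exacts [hH.isClique hk hx hne, (hH.adj_RK x hx k hk).symm]

lemma ncard_union_image (hH : ThinSpiderWith H S K R f w) [Finite α] {T : Set α} (hT : T ⊆ S) :
    (T ∪ f '' T).ncard = 2 * T.ncard := by
  rw [ncard_union_eq (hH.disjoint_SK.mono hT (image_subset_iff.mpr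
    (hT.trans hH.bijOn.mapsTo))), (hH.bijOn.injOn.mono hT).ncard_image]
  ring

lemma legs_of_isInducedP4 (hH : ThinSpiderWith H S K R f w) (h : IsInducedP4 H a b c d)
    (ha : a ∈ S) : d ∈ S ∧ b = f a ∧ c = f d := by
  obtain ⟨-, -, -, -, hbd, hcd, e₁, -, e₃, -, -, n₃⟩ := h
  have hb : b = f a := (hH.adj_iff_eq ha).mp e₁
  have hbK : b ∈ K := hb ▸ hH.bijOn.mapsTo ha
  have hd : d ∈ S := by
    rcases hH.mem_of_ne (hH.ne_w_of_adj e₃.symm) with (hd | hd) | hd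
    exacts [hd, absurd (hH.isClique hbK hd hbd) n₃, absurd (hH.adj_RK d hd b hbK).symm n₃]
  exact ⟨hd, hb, (hH.adj_iff_eq hd).mp e₃.symm⟩

lemma isInducedP4_cases (hH : ThinSpiderWith H S K R f w) (h : IsInducedP4 H a b c d) :
    ({a, b, c, d} : Set α) ⊆ R ∨ ∃ T ⊆ S, T.ncard = 2 ∧ ({a, b, c, d} : Set α) = T ∪ f '' T := by
  obtain ⟨-, hac, had, -, hbd, -, e₁, e₂, e₃, -⟩ := id h
  by_cases ha : a ∈ S
  · obtain ⟨hd, rfl, rfl⟩ := hH.legs_of_isInducedP4 h ha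
    refine Or.inr ⟨{a, d}, pair_subset ha hd, ncard_pair had, ?_⟩
    rw [image_pair]
    ext x
    simp only [mem_insert_iff, mem_singleton_iff, mem_union]
    tauto
  have hd : d ∉ S := fun hd => ha (hH.legs_of_isInducedP4 h.symm hd).1
  have hb : b ∉ S := fun hb =>
    hac (((hH.adj_iff_eq hb).mp e₁.symm).trans ((hH.adj_iff_eq hb).mp e₂).symm)
  have hc : c ∉ S := fun hc =>
    hbd (((hH.adj_iff_eq hc).mp e₂.symm).trans ((hH.adj_iff_eq hc).mp e₃).symm)
  have hKR : ∀ x ∈ ({a, b, c, d} : Set α), x ∈ K ∪ R := by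
    intro x hx
    obtain ⟨y, -, -, -, -, hxy, -⟩ := h.exists_adj_adj hx
    have hxS : x ∉ S := by
      simp only [mem_insert_iff, mem_singleton_iff] at hx
      rcases hx with rfl | rfl | rfl | rfl <;> assumption
    rcases hH.mem_of_ne (hH.ne_w_of_adj hxy) with (hx' | hx') | hx'
    exacts [absurd hx' hxS, Or.inl hx', Or.inr hx']
  refine Or.inl fun x hx => (hKR x hx).resolve_left fun hxK => ?_
  obtain ⟨y, hy, hyx, hxy⟩ := h.exists_not_adj hx
  exact hxy (hH.adj_of_mem_K hxK (hKR y hy) hyx.symm)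

lemma disjoint_R_union_image (hH : ThinSpiderWith H S K R f w) {T : Set α} (hT : T ⊆ S) :
    Disjoint R (T ∪ f '' T) :=
  disjoint_union_right.mpr ⟨hH.disjoint_SR.symm.mono_right hT,
    hH.disjoint_KR.symm.mono_right (image_subset_iff.mpr (hT.trans hH.bijOn.mapsTo))⟩

lemma not_adj_completion_iff (hH : ThinSpiderWith H S K R f w) (hu : u ∈ S) {x : α} :
    x ≠ f u ∧ ¬ (addTail H u w).Adj (f u) x ↔ x ∈ insert w (S \ {u}) := by
  have hfu : f u ∈ K := hH.bijOn.mapsTo hu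
  have hfuu : f u ≠ u := (hH.disjoint_SK.ne_of_mem hu hfu).symm
  rw [addTail_adj (hH.ne_w_of_mem_S hu), mem_insert_iff, mem_sdiff, mem_singleton_iff]
  simp only [hfuu, hH.ne_w_of_mem_K hfu, false_and, or_false]
  by_cases hxw : x = w
  · subst hxw
    exact iff_of_true ⟨(hH.ne_w_of_mem_K hfu).symm, fun h => hH.not_adj_w _ h.symm⟩ (Or.inl rfl)
  rcases hH.mem_of_ne hxw with (hx | hx) | hx
  · rw [H.adj_comm, hH.adj_iff_eq hx, hH.bijOn.injOn.eq_iff hu hx]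
    exact ⟨fun h => Or.inr ⟨hx, fun hxu => h.2 hxu.symm⟩,
      fun h => ⟨hH.disjoint_SK.ne_of_mem hx hfu, fun hux => h.resolve_left hxw |>.2 hux.symm⟩⟩
  · exact iff_of_false (fun h => h.2 (hH.isClique hfu hx (Ne.symm h.1)))
      (by rintro (h | ⟨h, -⟩); exacts [hxw h, hH.disjoint_SK.ne_of_mem h hx rfl])
  · exact iff_of_false (fun h => h.2 (hH.adj_RK x hx _ hfu).symm)
      (by rintro (h | ⟨h, -⟩); exacts [hxw h, hH.disjoint_SR.ne_of_mem h hx rfl])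

lemma fillCount_completion [Finite α] (hH : ThinSpiderWith H S K R f w) (hu : u ∈ S) :
    fillCount (addTail H u w) (makeUniversal (addTail H u w) (f u)) = K.ncard := by
  have hS : S.ncard = (S \ {u}).ncard + 1 := (ncard_sdiff_singleton_add_one hu).symm
  rw [fillCount_makeUniversal, ← hH.ncard_eq, hS, ← ncard_insert_of_notMem
    (fun h => hH.ne_w_of_mem_S h.1 rfl)]
  exact congrArg ncard (ext fun x => hH.not_adj_completion_iff hu)

lemma completion_adj_left (hH : ThinSpiderWith H S K R f w) (hu : u ∈ S) {y : α}
    (h : (makeUniversal (addTail H u w) (f u)).Adj u y) : y = f u ∨ y = w := by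
  have hfuu : f u ≠ u := (hH.disjoint_SK.ne_of_mem hu (hH.bijOn.mapsTo hu)).symm
  rw [makeUniversal_adj, addTail_adj (hH.ne_w_of_mem_S hu)] at h
  rcases h with (h | ⟨-, rfl⟩ | ⟨hu', -⟩) | ⟨hu' | rfl, -⟩
  exacts [Or.inl ((hH.adj_iff_eq hu).mp h), Or.inr rfl, absurd hu' (hH.ne_w_of_mem_S hu),
    absurd hu'.symm hfuu, Or.inl rfl]

lemma completion_adj_right (hH : ThinSpiderWith H S K R f w) (hu : u ∈ S) {y : α}
    (h : (makeUniversal (addTail H u w) (f u)).Adj w y) : y = f u ∨ y = u := by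
  have hfuw : f u ≠ w := hH.ne_w_of_mem_K (hH.bijOn.mapsTo hu)
  rw [makeUniversal_adj, addTail_adj (hH.ne_w_of_mem_S hu)] at h
  rcases h with (h | ⟨hw', -⟩ | ⟨-, rfl⟩) | ⟨hw' | rfl, -⟩
  exacts [absurd h (hH.not_adj_w y), absurd hw'.symm (hH.ne_w_of_mem_S hu), Or.inr rfl,
    absurd hw'.symm hfuw, Or.inl rfl]

lemma completion_adj_iff (hH : ThinSpiderWith H S K R f w) (hu : u ∈ S) {x y : α}
    (hx : x ∉ ({f u, u, w} : Set α)) (hy : y ∉ ({f u, u, w} : Set α)) :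
    (makeUniversal (addTail H u w) (f u)).Adj x y ↔ H.Adj x y := by
  simp only [mem_insert_iff, mem_singleton_iff, not_or] at hx hy
  simp [makeUniversal_adj, addTail_adj (hH.ne_w_of_mem_S hu), hx, hy]

lemma isInducedP4_of_completion (hH : ThinSpiderWith H S K R f w) (hu : u ∈ S)
    (h : IsInducedP4 (makeUniversal (addTail H u w) (f u)) a b c d) : IsInducedP4 H a b c d := by
  have hfu : f u ∉ ({a, b, c, d} : Set α) := fun hmem => by
    obtain ⟨y, -, hy, hn⟩ := h.exists_not_adj hmem
    exact hn (makeUniversal_adj_self hy)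
  have hu' : u ∉ ({a, b, c, d} : Set α) := fun hmem => by
    obtain ⟨y, hy, z, hz, hzu, huy, hyz⟩ := h.exists_adj_adj hmem
    rcases hH.completion_adj_left hu huy with rfl | rfl
    · exact hfu hy
    rcases hH.completion_adj_right hu hyz with rfl | rfl
    exacts [hfu hz, hzu rfl]
  have hw : w ∉ ({a, b, c, d} : Set α) := fun hmem => by
    obtain ⟨y, hy, z, hz, hzw, hwy, hyz⟩ := h.exists_adj_adj hmem
    rcases hH.completion_adj_right hu hwy with rfl | rfl
    · exact hfu hy
    rcases hH.completion_adj_left hu hyz with rfl | rfl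
    exacts [hfu hz, hzw rfl]
  refine h.congr_on (T := {f u, u, w}ᶜ) ?_ fun x hx y hy => hH.completion_adj_iff hu hx hy
  rintro x hx (rfl | rfl | rfl)
  exacts [hfu hx, hu' hx, hw hx]

lemma isP4SetOn_completion_cases (hH : ThinSpiderWith H S K R f w) (hu : u ∈ S) {t : Set α}
    (ht : IsP4SetOn (makeUniversal (addTail H u w) (f u)) t) :
    (t ⊆ R ∧ IsP4SetOn (restrictSet H R) t) ∨ ∃ T ⊆ S, T.ncard = 2 ∧ t = T ∪ f '' T := by
  obtain ⟨a, b, c, d, rfl, h⟩ := ht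
  have hH' := hH.isInducedP4_of_completion hu h
  refine (hH.isInducedP4_cases hH').imp_left fun hR =>
    ⟨hR, a, b, c, d, rfl, hH'.congr_on hR fun x hx y hy => ⟨fun h => ⟨h, hx, hy⟩, And.left⟩⟩

lemma isP4Sparse_completion [Finite α] (hH : ThinSpiderWith H S K R f w) (hu : u ∈ S)
    (hRsparse : IsP4Sparse (restrictSet H R)) :
    IsP4Sparse (makeUniversal (addTail H u w) (f u)) := by
  refine isP4Sparse_of_five_lt_ncard_union fun t₁ t₂ h₁ h₂ hne => ?_
  have h₁4 := h₁.ncard_eq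
  have h₂4 := h₂.ncard_eq
  rcases hH.isP4SetOn_completion_cases hu h₁ with ⟨hR₁, hP₁⟩ | ⟨T₁, hT₁S, hT₁, rfl⟩ <;>
    rcases hH.isP4SetOn_completion_cases hu h₂ with ⟨hR₂, hP₂⟩ | ⟨T₂, hT₂S, hT₂, rfl⟩
  · by_contra hle
    exact hne (hRsparse.eq_of_ncard_union_le hP₁ hP₂ (not_lt.mp hle))
  · rw [ncard_union_eq ((hH.disjoint_R_union_image hT₂S).mono_left hR₁)]
    omega
  · rw [ncard_union_eq ((hH.disjoint_R_union_image hT₁S).mono_left hR₂).symm]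
    omega
  · have hT : T₁ ≠ T₂ := by
      rintro rfl
      exact hne rfl
    have := ncard_lt_ncard_union_of_ne (toFinite _) (toFinite _) (hT₁.trans hT₂.symm) hT
    rw [union_union_union_comm, ← image_union, hH.ncard_union_image (union_subset hT₁S hT₂S)]
    omega

lemma leg_notMem_hub (hH : ThinSpiderWith H S K R f w) (hu : u ∈ S) {s : α} (hs : s ∈ S \ {u}) :
    s ∉ ({f u, u, w} : Set α) ∪ R ∧ f s ∉ ({f u, u, w} : Set α) ∪ R := by
  obtain ⟨hs, hsu⟩ := hs
  have hfs : f s ∈ K := hH.bijOn.mapsTo hs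
  simp only [mem_union, mem_insert_iff, mem_singleton_iff, not_or]
  exact ⟨⟨⟨hH.disjoint_SK.ne_of_mem hs (hH.bijOn.mapsTo hu), hsu, hH.ne_w_of_mem_S hs⟩,
    hH.disjoint_SR.notMem_of_mem_left hs⟩, ⟨⟨fun h => hsu (hH.bijOn.injOn hs hu h),
    (hH.disjoint_SK.ne_of_mem hu hfs).symm, hH.ne_w_of_mem_K hfs⟩,
    hH.disjoint_KR.notMem_of_mem_left hfs⟩⟩

lemma disjoint_firstEdgeChords_edgeSet (hH : ThinSpiderWith H S K R f w) (hu : u ∈ S) {s : α}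
    (hs : s ∈ S \ {u}) :
    Disjoint (firstEdgeChords s (f s) (f u) u w) (addTail H u w).edgeSet := by
  have ⟨hs', hfs'⟩ := hH.leg_notMem_hub hu hs
  simp only [mem_union, mem_insert_iff, mem_singleton_iff, not_or] at hs' hfs'
  refine disjoint_left.mpr fun p hp hpB => ?_
  simp only [firstEdgeChords, mem_insert_iff, mem_singleton_iff] at hp
  rcases hp with rfl | rfl | rfl | rfl | rfl <;>
    simp [addTail_adj (hH.ne_w_of_mem_S hu), hH.adj_iff_eq hs.1, H.adj_comm _ u,
      hH.adj_iff_eq hu, hH.not_adj_w, H.adj_comm _ w, hs', hfs',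
      Ne.symm hfs'.1.1, Ne.symm hfs'.1.2.1, Ne.symm hfs'.1.2.2] at hpB

lemma pairwiseDisjoint_firstEdgeChords (hH : ThinSpiderWith H S K R f w) (hu : u ∈ S) :
    (S \ {u}).PairwiseDisjoint fun s => firstEdgeChords s (f s) (f u) u w := by
  intro s hs t ht hst
  refine disjoint_left.mpr fun p hps hpt => ?_
  have hsK : f s ∈ K := hH.bijOn.mapsTo hs.1
  have hst' : f s ≠ f t := fun h => hst (hH.bijOn.injOn hs.1 ht.1 h)
  have ⟨hs', hfs'⟩ := hH.leg_notMem_hub hu hs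
  simp only [mem_union, mem_insert_iff, mem_singleton_iff, not_or] at hs' hfs'
  rcases left_mem_or_mem_of_mem_firstEdgeChords hps with h | h <;>
    have := mem_of_mem_firstEdgeChords hpt h <;>
    simp only [mem_insert_iff, mem_singleton_iff] at this
  · rcases this with h | h | h | h | h
    exacts [hst h, hH.disjoint_SK.ne_of_mem hs.1 (hH.bijOn.mapsTo ht.1) h, hs'.1.1 h,
      hs'.1.2.1 h, hs'.1.2.2 h]
  · rcases this with h | h | h | h | h
    exacts [hH.disjoint_SK.ne_of_mem ht.1 hsK h.symm, hst' h, hfs'.1.1 h, hfs'.1.2.1 h,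
      hfs'.1.2.2 h]

lemma adj_path (hH : ThinSpiderWith H S K R f w) (hu : u ∈ S) {s : α} (hs : s ∈ S \ {u}) :
    (addTail H u w).Adj s (f s) ∧ (addTail H u w).Adj (f s) (f u) ∧
      (addTail H u w).Adj (f u) u ∧ (addTail H u w).Adj u w := by
  have hfs : f s ∈ K := hH.bijOn.mapsTo hs.1
  have hB {x y : α} (h : H.Adj x y) : (addTail H u w).Adj x y :=
    (addTail_adj (hH.ne_w_of_mem_S hu)).mpr (Or.inl h)
  exact ⟨hB ((hH.adj_iff_eq hs.1).mpr rfl), hB (hH.isClique hfs (hH.bijOn.mapsTo hu)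
    fun h => hs.2 (hH.bijOn.injOn hs.1 hu h)), hB ((hH.adj_iff_eq hu).mpr rfl).symm,
    (addTail_adj (hH.ne_w_of_mem_S hu)).mpr (Or.inr (Or.inl ⟨rfl, rfl⟩))⟩

lemma nonempty_inter_firstEdgeChords (hH : ThinSpiderWith H S K R f w) (hu : u ∈ S)
    {G' : SimpleGraph α} (hle : addTail H u w ≤ G') (hG' : IsP4Sparse G') {s : α}
    (hs : s ∈ S \ {u}) : (G'.edgeSet ∩ firstEdgeChords s (f s) (f u) u w).Nonempty := by
  have ⟨hs', hfs'⟩ := hH.leg_notMem_hub hu hs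
  simp only [mem_union, mem_insert_iff, mem_singleton_iff, not_or] at hs' hfs'
  obtain ⟨e₁, e₂, e₃, e₄⟩ := hH.adj_path hu hs
  exact hG'.firstEdgeChords_inter_nonempty hs'.1.1 hs'.1.2.1 hs'.1.2.2 hfs'.1.2.1 hfs'.1.2.2
    (hH.ne_w_of_mem_K (hH.bijOn.mapsTo hu)) (hle e₁) (hle e₂) (hle e₃) (hle e₄)

lemma nontrivial_inter_firstEdgeChords (hH : ThinSpiderWith H S K R f w) (hu : u ∈ S)
    {G' : SimpleGraph α} (hle : addTail H u w ≤ G') (hG' : IsP4Sparse G') {r s : α} (hr : r ∈ R)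
    (hs : s ∈ S \ {u}) (hfuw : ¬ G'.Adj (f u) w) (hur : ¬ G'.Adj u r) (hwr : ¬ G'.Adj w r) :
    (G'.edgeSet ∩ firstEdgeChords s (f s) (f u) u w).Nontrivial := by
  have ⟨hs', hfs'⟩ := hH.leg_notMem_hub hu hs
  simp only [mem_union, mem_insert_iff, mem_singleton_iff, not_or] at hs' hfs'
  obtain ⟨e₁, e₂, e₃, e₄⟩ := hH.adj_path hu hs
  have hr' {k : α} (hk : k ∈ K) : G'.Adj k r :=
    hle ((addTail_adj (hH.ne_w_of_mem_S hu)).mpr (Or.inl (hH.adj_RK r hr k hk).symm))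
  exact hG'.firstEdgeChords_inter_nontrivial hs'.1.1 hs'.1.2.1 hs'.1.2.2 hfs'.1.2.1 hfs'.1.2.2
    (hH.ne_w_of_mem_K (hH.bijOn.mapsTo hu)) (hH.disjoint_SR.ne_of_mem hu hr)
    (hH.ne_w_of_mem_R hr).symm (hle e₁) (hle e₂) (hle e₃) (hle e₄)
    (hr' (hH.bijOn.mapsTo hs.1)) (hr' (hH.bijOn.mapsTo hu)) hfuw hur hwr

lemma exists_fill_notMem_firstEdgeChords (hH : ThinSpiderWith H S K R f w) (hu : u ∈ S)
    {G' : SimpleGraph α} {r : α} (hr : r ∈ R)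
    (h : G'.Adj (f u) w ∨ G'.Adj u r ∨ G'.Adj w r) :
    ∃ p ∈ G'.edgeSet \ (addTail H u w).edgeSet,
      ∀ s ∈ S \ {u}, p ∉ firstEdgeChords s (f s) (f u) u w := by
  have huw := hH.ne_w_of_mem_S hu
  have hfu : f u ∈ K := hH.bijOn.mapsTo hu
  obtain ⟨x, hx, y, hy, hxy, hnxy⟩ : ∃ x ∈ ({f u, u, w} : Set α) ∪ R,
      ∃ y ∈ ({f u, u, w} : Set α) ∪ R, G'.Adj x y ∧ ¬ (addTail H u w).Adj x y := by
    simp only [addTail_adj huw, not_or, not_and]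
    rcases h with h | h | h
    · exact ⟨f u, by simp, w, by simp, h, fun h => hH.not_adj_w _ h.symm,
        fun h => absurd h (hH.disjoint_SK.ne_of_mem hu hfu).symm,
        fun h => absurd h (hH.ne_w_of_mem_K hfu)⟩
    · exact ⟨u, by simp, r, by simp [hr], h, fun h => hH.not_adj_RS r hr u hu h.symm,
        fun _ => hH.ne_w_of_mem_R hr, fun h => absurd h huw⟩
    · exact ⟨w, by simp, r, by simp [hr], h, hH.not_adj_w r, fun h => absurd h huw.symm,
        fun _ => (hH.disjoint_SR.ne_of_mem hu hr).symm⟩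
  refine ⟨s(x, y), ⟨hxy, hnxy⟩, fun s hs hmem => ?_⟩
  have ⟨hs', hfs'⟩ := hH.leg_notMem_hub hu hs
  rcases left_mem_or_mem_of_mem_firstEdgeChords hmem with h | h <;>
    rcases Sym2.mem_iff.mp h with rfl | rfl
  exacts [hs' hx, hs' hy, hfs' hx, hfs' hy]

lemma ncard_le_fillCount [Finite α] (hH : ThinSpiderWith H S K R f w) (hu : u ∈ S)
    (hR : R.Nonempty) {G' : SimpleGraph α} (hle : addTail H u w ≤ G') (hG' : IsP4Sparse G') :
    K.ncard ≤ fillCount (addTail H u w) G' := by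
  obtain ⟨r, hr⟩ := hR
  have hI : (S \ {u}).ncard + 1 = K.ncard := hH.ncard_eq ▸ ncard_sdiff_singleton_add_one hu
  suffices (S \ {u}).ncard < fillCount (addTail H u w) G' by omega
  set A : α → Set (Sym2 α) := fun s => G'.edgeSet ∩ firstEdgeChords s (f s) (f u) u w
  have hdisj : (S \ {u}).PairwiseDisjoint A :=
    (hH.pairwiseDisjoint_firstEdgeChords hu).mono fun s => inter_subset_right
  have hA : ∀ s ∈ S \ {u}, (A s).Nonempty := fun s hs =>
    hH.nonempty_inter_firstEdgeChords hu hle hG' hs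
  have hAF : ∀ s ∈ S \ {u}, A s ⊆ G'.edgeSet \ (addTail H u w).edgeSet := fun s hs p hp =>
    ⟨hp.1, (hH.disjoint_firstEdgeChords_edgeSet hu hs).notMem_of_mem_left hp.2⟩
  by_cases hM : G'.Adj (f u) w ∨ G'.Adj u r ∨ G'.Adj w r
  · obtain ⟨p, hp, hpA⟩ := hH.exists_fill_notMem_firstEdgeChords hu hr hM
    exact ncard_lt_ncard_of_pairwiseDisjoint_of_mem (toFinite _) hdisj hA hAF hp
      fun s hs hps => hpA s hs hps.2
  · simp only [not_or] at hM
    obtain ⟨s, hs⟩ : (S \ {u}).Nonempty :=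
      nonempty_of_ncard_ne_zero (by have := hH.two_le_ncard; omega)
    exact ncard_lt_ncard_of_pairwiseDisjoint_of_nontrivial (toFinite _) hdisj hA hAF hs
      (hH.nontrivial_inter_firstEdgeChords hu hle hG' hr hs hM.1 hM.2.1 hM.2.2)

end ThinSpiderWith

/-- tail at `u ∈ S` of a thin spider with `R ≠ ∅` and `H[R]` P₄-sparse. -/
theorem thinSpider_tail_S_nonempty_R [Fintype α]
    (H : SimpleGraph α) (u w : α) (S K R : Set α)
    (hspider : ThinSpider H S K R)
    (hcover : S ∪ K ∪ R = {w}ᶜ)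
    (hw : ∀ x, ¬ H.Adj w x)
    (hR : R.Nonempty) (hRsparse : IsP4Sparse (restrictSet H R)) (hu : u ∈ S) :
    IsLeast (completionFills IsP4Sparse (addTail H u w)) K.ncard := by
  obtain ⟨f, hH⟩ := hspider.exists_thinSpiderWith hcover hw
  refine ⟨⟨_, le_makeUniversal, hH.isP4Sparse_completion hu hRsparse,
    hH.fillCount_completion hu⟩, ?_⟩
  rintro n ⟨G', hle, hG', rfl⟩
  exact hH.ncard_le_fillCount hu hR hle hG'
end
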